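/- Let B be a positive integer and A ⊂ ℝ^B \ {0}. If the VC dimension of the class of open halfspaces { H_{a,c} : a ∈ A, c ∈ ℝ } is strictly greater than B, then the origin 0 belongs to the convex hull of A. -/

import Mathlib

open Matrix

/-- A class `C` of subsets of `α` shatters a set `X` if every subset of `X`
is cut out of `X` by some member of `C`. -/
def Shatters {α : Type*} (C : Set (Set α)) (X : Set α) : Prop :=
  ∀ Y ⊆ X, ∃ B ∈ C, Y = X ∩ B

/-- The VC dimension of a class `C` of subsets: the supremum (in `ℕ∞`) of the
cardinalities of finite sets shattered by `C`. -/
noncomputable def vcDim {α : Type*} (C : Set (Set α)) : ℕ∞ :=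
  ⨆ (X : Finset α) (_ : Shatters C (X : Set α)), (X.card : ℕ∞)

/-- The open halfspace `H_{a,c} = {x ∈ ℝ^B : aᵀx + c < 0}`. -/
def Halfspace {B : ℕ} (a : Fin B → ℝ) (c : ℝ) : Set (Fin B → ℝ) :=
  {x | a ⬝ᵥ x + c < 0}

/-!
If `0 ∉ conv A`, the finitely many normals `a_Y ∈ A` realizing the subsets `Y` of a shattered set
`X` of more than `B` points all lie in an open halfspace `{a | 0 < a ⬝ᵥ v}`. Counting dimensions
modulo `v`, there are weights `μ ≠ 0` on `X` with `∑ μ = 0` and `∑ μ x • x = t • v`. For the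
halfspace `H_{a,c}` cutting out `{μ > 0}` every term of
`t * (a ⬝ᵥ v) = ∑ μ x * (a ⬝ᵥ x + c)` is nonpositive and one is negative, so `t < 0`;
the halfspace cutting out `{μ < 0}` gives `t > 0` in the same way.
-/

open Module

theorem exists_shatters_lt_card_of_lt_vcDim {α : Type*} {C : Set (Set α)} {n : ℕ}
    (h : (n : ℕ∞) < vcDim C) : ∃ X : Finset α, n < X.card ∧ Shatters C X := by
  simp only [vcDim, lt_iSup_iff] at h
  obtain ⟨X, hX, hlt⟩ := h
  exact ⟨X, by exact_mod_cast hlt, hX⟩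

theorem Shatters.exists_halfspace_pattern {B : ℕ} {A : Set (Fin B → ℝ)} {X : Finset (Fin B → ℝ)}
    (h : Shatters {H | ∃ a ∈ A, ∃ c : ℝ, H = Halfspace a c} X) :
    ∃ (a : Set X → Fin B → ℝ) (c : Set X → ℝ),
      (∀ Y, a Y ∈ A) ∧ ∀ Y (x : X), a Y ⬝ᵥ x + c Y < 0 ↔ x ∈ Y := by
  have : ∀ Y : Set X, ∃ a ∈ A, ∃ c : ℝ, ∀ x : X, a ⬝ᵥ x + c < 0 ↔ x ∈ Y := by
    intro Y
    obtain ⟨H, ⟨a, ha, c, rfl⟩, hY⟩ := h (Subtype.val '' Y) (by rintro _ ⟨x, -, rfl⟩; exact x.2)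
    refine ⟨a, ha, c, fun x => ?_⟩
    simpa [Halfspace, x.2] using (congrArg (x.1 ∈ ·) hY).to_iff.symm
  choose a ha c hc using this
  exact ⟨a, c, ha, hc⟩

theorem exists_dotProduct_pos_of_zero_notMem_convexHull {ι : Type*} [Fintype ι]
    {s : Set (ι → ℝ)} (hs : s.Finite) (h0 : 0 ∉ convexHull ℝ s) :
    ∃ v : ι → ℝ, ∀ a ∈ s, 0 < a ⬝ᵥ v := by
  classical
  obtain ⟨f, u, hu0, hf⟩ := geometric_hahn_banach_point_closed (convex_convexHull ℝ s)
    (hs.isCompact_convexHull (𝕜 := ℝ)).isClosed h0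
  refine ⟨(dotProductEquiv ℝ ι).symm f.toLinearMap, fun a ha => ?_⟩
  have hfa : f a = (dotProductEquiv ℝ ι).symm f.toLinearMap ⬝ᵥ a := by
    rw [← dotProductEquiv_apply_apply, LinearEquiv.apply_symm_apply]; rfl
  rw [dotProduct_comm, ← hfa]
  exact (map_zero f ▸ hu0).trans (hf a (subset_convexHull ℝ s ha))

theorem exists_ne_zero_sum_eq_zero_sum_smul_mem_span {K E ι : Type*} [Field K]
    [AddCommGroup E] [Module K E] [FiniteDimensional K E] [Fintype ι] (x : ι → E) {v : E}
    (hv : v ≠ 0) (hcard : finrank K E < Fintype.card ι) :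
    ∃ μ : ι → K, μ ≠ 0 ∧ ∑ i, μ i = 0 ∧ ∑ i, μ i • x i ∈ K ∙ v := by
  have hdep : ¬LinearIndependent K fun i => ((K ∙ v).mkQ (x i), (1 : K)) := fun h => by
    have hle := h.fintype_card_le_finrank
    have hdim := (K ∙ v).finrank_quotient_add_finrank
    rw [finrank_prod, finrank_self] at hle
    rw [finrank_span_singleton hv] at hdim
    omega
  obtain ⟨μ, hμ, i, hi⟩ := Fintype.not_linearIndependent_iff.1 hdep
  refine ⟨μ, fun h => hi (by simp [h]), by simpa [Prod.snd_sum] using congrArg Prod.snd hμ, ?_⟩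
  rw [← Submodule.ker_mkQ (K ∙ v), LinearMap.mem_ker, map_sum]
  simpa [Prod.fst_sum] using congrArg Prod.fst hμ

theorem map_sum_smul_neg_of_add_neg_iff_pos {𝕜 E ι : Type*} [Field 𝕜] [LinearOrder 𝕜]
    [IsStrictOrderedRing 𝕜] [AddCommGroup E] [Module 𝕜 E] [Fintype ι] (ℓ : E →ₗ[𝕜] 𝕜) (c : 𝕜)
    {x : ι → E} {μ : ι → 𝕜} (hμ : μ ≠ 0) (hsum : ∑ i, μ i = 0)
    (hpat : ∀ i, ℓ (x i) + c < 0 ↔ 0 < μ i) : ℓ (∑ i, μ i • x i) < 0 := by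
  have hterm : ∀ i, μ i * (ℓ (x i) + c) ≤ 0 := fun i => by
    rcases lt_or_ge 0 (μ i) with hi | hi
    · exact (mul_neg_of_pos_of_neg hi ((hpat i).2 hi)).le
    · exact mul_nonpos_of_nonpos_of_nonneg hi (not_lt.1 fun h => hi.not_gt ((hpat i).1 h))
  obtain ⟨i, -, hi⟩ := Finset.exists_pos_of_sum_zero_of_exists_nonzero μ hsum
    (by simpa using Function.ne_iff.1 hμ)
  calc ℓ (∑ i, μ i • x i) = ∑ i, μ i * (ℓ (x i) + c) := by
        simp [mul_add, Finset.sum_add_distrib, ← Finset.sum_mul, hsum]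
    _ < 0 := Finset.sum_neg' (fun i _ => hterm i)
        ⟨i, Finset.mem_univ i, mul_neg_of_pos_of_neg hi ((hpat i).2 hi)⟩

theorem zero_mem_convexHull_of_vcDim_gt (B : ℕ)
    (A : Set (Fin B → ℝ))
    (hvc : (B : ℕ∞) < vcDim {H : Set (Fin B → ℝ) | ∃ a ∈ A, ∃ c : ℝ, H = Halfspace a c}) :
    (0 : Fin B → ℝ) ∈ convexHull ℝ A := by
  obtain ⟨X, hcard, hX⟩ := exists_shatters_lt_card_of_lt_vcDim hvc
  obtain ⟨a, c, haA, hpat⟩ := hX.exists_halfspace_pattern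
  by_contra h0
  obtain ⟨v, hv⟩ := exists_dotProduct_pos_of_zero_notMem_convexHull (Set.finite_range a)
    fun h => h0 (convexHull_mono (Set.range_subset_iff.2 haA) h)
  have hv0 : v ≠ 0 := by rintro rfl; simpa using hv _ ⟨∅, rfl⟩
  obtain ⟨μ, hμ, hμsum, hμspan⟩ := exists_ne_zero_sum_eq_zero_sum_smul_mem_span (K := ℝ)
    (fun x : X => (x : Fin B → ℝ)) hv0 (by simpa using hcard)
  obtain ⟨t, ht⟩ := Submodule.mem_span_singleton.1 hμspan
  have hneg : ∀ ν : X → ℝ, ν ≠ 0 → ∑ x, ν x = 0 →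
      ∀ s : ℝ, ∑ x, ν x • (x : Fin B → ℝ) = s • v → s < 0 := by
    intro ν hν hνsum s hs
    have := map_sum_smul_neg_of_add_neg_iff_pos (dotProductBilin ℝ ℝ (a {x | 0 < ν x}))
      (c {x | 0 < ν x}) hν hνsum fun x => hpat _ x
    rw [hs] at this
    simp only [dotProductBilin_apply_apply, dotProduct_smul, smul_eq_mul] at this
    exact neg_of_mul_neg_left this (hv _ ⟨_, rfl⟩).le
  have h₁ := hneg μ hμ hμsum t ht.symm
  have h₂ := hneg (-μ) (neg_ne_zero.2 hμ)
    (by simp only [Pi.neg_apply, Finset.sum_neg_distrib, hμsum, neg_zero]) (-t)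
    (by simp [neg_smul, ht])
  linarith
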